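/- Let φ be a white-noise random dynamical system on a complete separable metric space (E,d) over an ergodic metric dynamical system, admitting an invariant probability measure ρ. If for all x,y ∈ E the distance d(φ_t(·,x), φ_t(·,y)) converges to 0 in probability as t → ∞, then weak synchronization holds for φ. -/

import Mathlib

open MeasureTheory ProbabilityTheory Filter Topology
open scoped ENNReal

/-- A white-noise (filtered) random dynamical system on a metric space `E` over an ergodic
metric dynamical system `θ` on a probability space `(Ω, F, P)`. -/
structure WhiteNoiseRDS (Ω E : Type) [MeasurableSpace Ω] [MetricSpace E]
    [MeasurableSpace E] [BorelSpace E] where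
  /-- the underlying probability measure -/
  P : Measure Ω
  P_prob : IsProbabilityMeasure P
  /-- the metric dynamical system (group of shifts) -/
  θ : ℝ → Ω → Ω
  θ_meas : ∀ t, Measurable (θ t)
  θ_zero : ∀ ω, θ 0 ω = ω
  θ_add : ∀ s t : ℝ, ∀ ω, θ (s + t) ω = θ s (θ t ω)
  θ_preserves : ∀ t, MeasurePreserving (θ t) P P
  θ_ergodic : ∀ A : Set Ω, MeasurableSet A → (∀ t, θ t ⁻¹' A = A) → P A = 0 ∨ P A = 1
  /-- the cocycle -/
  φ : ℝ → Ω → E → E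
  φ_meas : Measurable fun p : ℝ × Ω × E => φ p.1 p.2.1 p.2.2
  φ_zero : ∀ ω x, φ 0 ω x = x
  φ_cocycle : ∀ s t : ℝ, 0 ≤ s → 0 ≤ t → ∀ ω x, φ (t + s) ω x = φ t (θ s ω) (φ s ω x)
  φ_cont : ∀ s : ℝ, 0 ≤ s → ∀ ω, Continuous fun x => φ s ω x
  /-- two-parameter filtration -/
  F : ℝ → ℝ → MeasurableSpace Ω
  F_le : ∀ s t : ℝ, F s t ≤ ‹MeasurableSpace Ω›
  F_mono : ∀ s t u v : ℝ, s ≤ t → t ≤ u → u ≤ v → F t u ≤ F s v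
  F_shift : ∀ r s t : ℝ, F (s + r) (t + r) = MeasurableSpace.comap (θ r) (F s t)
  F_indep : ∀ (n : ℕ) (ts : Fin (n + 1) → ℝ), Monotone ts →
    iIndep (fun i : Fin n => F (ts i.castSucc) (ts i.succ)) P
  φ_adapted : ∀ s : ℝ, 0 ≤ s → ∀ x : E, Measurable[F 0 s] fun ω => φ s ω x

namespace WhiteNoiseRDS

variable {Ω E : Type} [MeasurableSpace Ω] [MetricSpace E] [MeasurableSpace E] [BorelSpace E]

/-- `F_0`: the smallest σ-algebra containing all `F s 0`, `s ≤ 0`. -/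
def F0 (R : WhiteNoiseRDS Ω E) : MeasurableSpace Ω := ⨆ s ∈ Set.Iic (0 : ℝ), R.F s 0

/-- `ρ` is an invariant probability measure for the Markov semigroup associated to `φ`. -/
def Invariant (R : WhiteNoiseRDS Ω E) (ρ : Measure E) : Prop :=
  ∀ t : ℝ, 0 ≤ t → ∀ f : BoundedContinuousFunction E ℝ,
    ∫ x, (∫ ω, f (R.φ t ω x) ∂ R.P) ∂ρ = ∫ x, f x ∂ρ

/-- `φ` is strongly mixing w.r.t. `ρ`: the law of `φ_t(·,x)` converges weakly to `ρ`. -/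
def StronglyMixing (R : WhiteNoiseRDS Ω E) (ρ : Measure E) : Prop :=
  ∀ x : E, ∀ f : BoundedContinuousFunction E ℝ,
    Tendsto (fun t : ℝ => ∫ ω, f (R.φ t ω x) ∂ R.P) atTop (𝓝 (∫ y, f y ∂ρ))

/-- Weak global pointwise stability: there is a Borel set `U` of full `ρ`-measure and times
`t n ↑ ∞` such that any two points of `U` come `η`-close along `t n` with probability
bounded below by some `δ(x,y) > 0`. -/
def WeakGlobalPointwiseStability (R : WhiteNoiseRDS Ω E) (ρ : Measure E) : Prop :=
  ∃ U : Set E, MeasurableSet U ∧ ρ U = 1 ∧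
    ∃ t : ℕ → ℝ, StrictMono t ∧ Tendsto t atTop atTop ∧
      ∀ x ∈ U, ∀ y ∈ U, ∃ δ : ℝ≥0∞, 0 < δ ∧ ∀ η : ℝ, 0 < η →
        δ ≤ liminf (fun n => R.P {ω | dist (R.φ (t n) ω x) (R.φ (t n) ω y) ≤ η}) atTop

/-- Weak synchronization: there is an `F_0`-measurable random point `a` which is invariant
under the flow and attracts every deterministic point in probability (in the pullback sense). -/
def WeakSynchronization (R : WhiteNoiseRDS Ω E) : Prop :=
  ∃ a : Ω → E, Measurable[R.F0] a ∧
    (∀ t : ℝ, 0 ≤ t → ∀ᵐ ω ∂ R.P, R.φ t ω (a ω) = a (R.θ t ω)) ∧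
    ∀ x : E, ∀ ε : ℝ, 0 < ε →
      Tendsto (fun t : ℝ => R.P {ω | ε ≤ dist (R.φ t (R.θ (-t) ω) x) (a ω)}) atTop (𝓝 0)

end WhiteNoiseRDS

/-!
The pullback trajectories `ψ_t = φ_t(θ_{-t}·, x₀)` (`pullback`) are Cauchy in probability.
Write `q_t(x, y) = P(d(φ_t(·, x), φ_t(·, y)) ≥ ε)` (`sepProb`). For `0 ≤ t` and `0 ≤ r`,
independence of increments and the cocycle property give
`P(d(ψ_{t+r}, ψ_t) ≥ ε) = E[q_t(φ_r(·, x₀), x₀)]`. Inserting the intermediate point `φ_r(·, y)`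
with `y` distributed according to `ρ`, the cocycle property and the invariance of `ρ` bound this
by `∫ q_{t+r}(x₀, y) dρ(y) + ∫ q_t(x₀, y) dρ(y)` (at level `ε / 2`), which tends to `0` by
dominated convergence. Convergence in probability is complete, so the pullback trajectories
converge to an `F_0`-measurable `a`. Equivariance of `a` follows from
`ψ_{t+s} ∘ θ_t = φ_t(·, ψ_s)`, and every other starting point is attracted because its pullback
trajectory stays close in probability to that of `x₀`.
-/

namespace MeasureTheory

variable {α E : Type*} {m m₀ : MeasurableSpace α} {μ : Measure α} [MetricSpace E]

theorem measure_le_dist_le_add (μ : Measure α) (f g h : α → E) (ε : ℝ) :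
    μ {x | ε ≤ dist (f x) (h x)} ≤
      μ {x | ε / 2 ≤ dist (f x) (g x)} + μ {x | ε / 2 ≤ dist (g x) (h x)} := by
  refine (measure_mono fun x hx => ?_).trans (measure_union_le _ _)
  by_contra hx'
  simp only [Set.mem_union, Set.mem_ofPred_eq, not_or, not_le] at hx hx'
  linarith [dist_triangle (f x) (g x) (h x)]

theorem ae_cauchySeq_of_measure_dist_succ_le {f : ℕ → α → E}
    (hf : ∀ k, μ {x | (1 / 2 : ℝ) ^ k ≤ dist (f (k + 1) x) (f k x)} ≤ 2⁻¹ ^ k) :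
    ∀ᵐ x ∂μ, CauchySeq fun k => f k x := by
  have hsum : ∑' k, μ {x | (1 / 2 : ℝ) ^ k ≤ dist (f (k + 1) x) (f k x)} ≠ ∞ :=
    ne_top_of_le_ne_top (by simp [ENNReal.tsum_geometric]) (ENNReal.tsum_le_tsum hf)
  filter_upwards [ae_eventually_notMem hsum] with x hx
  refine cauchySeq_of_summable_dist <| (summable_geometric_of_lt_one (by norm_num)
    (by norm_num : (1 / 2 : ℝ) < 1)).of_norm_bounded_eventually_nat ?_
  filter_upwards [hx] with k hk
  simp only [not_le] at hk
  rw [Real.norm_of_nonneg dist_nonneg, dist_comm]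
  exact hk.le

variable {ι : Type*} {l : Filter ι} {f : ι → α → E}

theorem exists_seq_tendsto_measure_dist_succ_le [l.NeBot] [l.IsCountablyGenerated]
    {p : ι → Prop} (hp : ∀ᶠ i in l, p i)
    (hf : ∀ ε, 0 < ε →
      Tendsto (fun i : ι × ι => μ {x | ε ≤ dist (f i.1 x) (f i.2 x)}) (l ×ˢ l) (𝓝 0)) :
    ∃ ns : ℕ → ι, Tendsto ns atTop l ∧ (∀ k, p (ns k)) ∧
      ∀ k, μ {x | (1 / 2 : ℝ) ^ k ≤ dist (f (ns (k + 1)) x) (f (ns k) x)} ≤ 2⁻¹ ^ k := by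
  obtain ⟨s, hs⟩ := l.exists_antitone_basis
  have hC (k : ℕ) : ∃ C ∈ l, ∀ i ∈ C, ∀ j ∈ C,
      μ {x | (1 / 2 : ℝ) ^ k ≤ dist (f i x) (f j x)} ≤ 2⁻¹ ^ k :=
    eventually_prod_self_iff.1 <| (ENNReal.tendsto_nhds_zero.1 (hf _ (by positivity))) _
      (ENNReal.pow_pos (by norm_num) k)
  choose C hCl hC using hC
  have hB (k : ℕ) : (s k ∩ (⋂ j ∈ Finset.range (k + 1), C j) ∩ {i | p i}).Nonempty :=
    Filter.nonempty_of_mem <| inter_mem (inter_mem (hs.mem k)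
      ((Finset.range _).iInter_mem_sets.2 fun j _ => hCl j)) hp
  choose ns hns using hB
  refine ⟨ns, hs.tendsto fun k => (hns k).1.1, fun k => (hns k).2, fun k => hC k _ ?_ _ ?_⟩
  · exact Set.mem_iInter₂.1 (hns (k + 1)).1.2 k (by simp)
  · exact Set.mem_iInter₂.1 (hns k).1.2 k (by simp)

theorem tendstoInMeasure_of_cauchy_of_tendstoInMeasure_comp {g : α → E} {ns : ℕ → ι}
    (hf : ∀ ε, 0 < ε →
      Tendsto (fun i : ι × ι => μ {x | ε ≤ dist (f i.1 x) (f i.2 x)}) (l ×ˢ l) (𝓝 0))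
    (hns : Tendsto ns atTop l) (hg : TendstoInMeasure μ (f ∘ ns) atTop g) :
    TendstoInMeasure μ f l g := by
  refine tendstoInMeasure_iff_dist.2 fun ε hε => ENNReal.tendsto_nhds_zero.2 fun δ hδ => ?_
  obtain ⟨C, hCl, hC⟩ : ∃ C ∈ l, ∀ i ∈ C, ∀ j ∈ C,
      μ {x | ε / 2 ≤ dist (f i x) (f j x)} ≤ δ / 2 := eventually_prod_self_iff.1 <|
    ENNReal.tendsto_nhds_zero.1 (hf (ε / 2) (by positivity)) (δ / 2) (ENNReal.half_pos hδ.ne')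
  obtain ⟨k, hkC, hkg⟩ := ((hns.eventually_mem hCl).and <| ENNReal.tendsto_nhds_zero.1
    (tendstoInMeasure_iff_dist.1 hg (ε / 2) (by positivity)) (δ / 2)
      (ENNReal.half_pos hδ.ne')).exists
  filter_upwards [hCl] with i hi
  calc μ {x | ε ≤ dist (f i x) (g x)}
      ≤ μ {x | ε / 2 ≤ dist (f i x) (f (ns k) x)} + μ {x | ε / 2 ≤ dist (f (ns k) x) (g x)} :=
        measure_le_dist_le_add μ _ _ _ ε
    _ ≤ δ / 2 + δ / 2 := add_le_add (hC i hi _ hkC) hkg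
    _ = δ := ENNReal.add_halves δ

theorem exists_tendstoInMeasure_of_cauchy [MeasurableSpace E] [BorelSpace E]
    [CompleteSpace E] [SecondCountableTopology E] [Nonempty E] [IsFiniteMeasure μ]
    [l.NeBot] [l.IsCountablyGenerated] (hm : m ≤ m₀) (hfm : ∀ᶠ i in l, Measurable[m] (f i))
    (hf : ∀ ε, 0 < ε →
      Tendsto (fun i : ι × ι => μ {x | ε ≤ dist (f i.1 x) (f i.2 x)}) (l ×ˢ l) (𝓝 0)) :
    ∃ g : α → E, Measurable[m] g ∧ TendstoInMeasure μ f l g := by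
  obtain ⟨ns, hns, hnsm, hsmall⟩ := exists_seq_tendsto_measure_dist_succ_le hfm hf
  refine ⟨fun x => limUnder atTop fun k => f (ns k) x,
    -- the instance slot of `limUnder` is filled with the sub-σ-algebra `m`
    (@StronglyMeasurable.limUnder _ _ _ m _ _ _ _ _ _ _ fun k =>
      (hnsm k).stronglyMeasurable).measurable,
    tendstoInMeasure_of_cauchy_of_tendstoInMeasure_comp hf hns ?_⟩
  refine tendstoInMeasure_of_tendsto_ae
    (fun k => ((hnsm k).mono hm le_rfl).aestronglyMeasurable) ?_
  filter_upwards [ae_cauchySeq_of_measure_dist_succ_le (f := fun k => f (ns k)) hsmall] with x hx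
  exact hx.tendsto_limUnder

end MeasureTheory

theorem MeasureTheory.TendstoInMeasure.comp_measurePreserving {α β ι E : Type*}
    [MeasurableSpace α] [MeasurableSpace β] [EDist E] {μ : Measure α} {ν : Measure β}
    {l : Filter ι} {f : ι → α → E} {g : α → E} {T : β → α} (hT : MeasurePreserving T ν μ)
    (h : TendstoInMeasure μ f l g) : TendstoInMeasure ν (fun i => f i ∘ T) l (g ∘ T) :=
  fun ε hε => tendsto_of_tendsto_of_tendsto_of_le_of_le tendsto_const_nhds (h ε hε)
    (fun _ => zero_le) fun _ =>
      (Measure.le_map_apply hT.measurable.aemeasurable _).trans_eq (by rw [hT.map_eq])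

theorem ProbabilityTheory.IndepFun.measure_preimage_prodMk_eq_lintegral {Ω α β : Type*}
    [MeasurableSpace Ω] [MeasurableSpace α] [mβ : MeasurableSpace β] {μ : Measure Ω}
    [IsFiniteMeasure μ] {X : Ω → α} {Y : Ω → β} (h : IndepFun X Y μ) (hX : Measurable X)
    (hY : Measurable Y) {S : Set (α × β)} (hS : MeasurableSet S) :
    μ ((fun ω => (X ω, Y ω)) ⁻¹' S) = ∫⁻ ω, μ (Y ⁻¹' (Prod.mk (X ω) ⁻¹' S)) ∂μ := by
  rw [← Measure.map_apply (hX.prodMk hY) hS,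
    (indepFun_iff_map_prod_eq_prod_map_map hX.aemeasurable hY.aemeasurable).1 h,
    Measure.prod_apply hS, lintegral_map (measurable_measure_prodMk_left hS) hX]
  exact lintegral_congr fun ω => Measure.map_apply hY (measurable_prodMk_left hS)

theorem measurableSet_le_dist_of_continuous_of_measurable {α E : Type*} [mα : MeasurableSpace α]
    [MetricSpace E] [SecondCountableTopology E] [MeasurableSpace E] [BorelSpace E]
    {u : E → α → E} (hcont : ∀ a, Continuous fun y => u y a) (hmeas : ∀ y, Measurable (u y))
    (ε : ℝ) : MeasurableSet {p : (E × E) × α | ε ≤ dist (u p.1.1 p.2) (u p.1.2 p.2)} := by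
  have hu : Measurable (Function.uncurry u) :=
    measurable_uncurry_of_continuous_of_measurable hcont hmeas
  exact measurableSet_le measurable_const
    ((hu.comp (measurable_fst.fst.prodMk measurable_snd)).dist
      (hu.comp (measurable_fst.snd.prodMk measurable_snd)))

namespace WhiteNoiseRDS

variable {Ω E : Type} [MeasurableSpace Ω] [MetricSpace E] [MeasurableSpace E] [BorelSpace E]
  (R : WhiteNoiseRDS Ω E) {ρ : Measure E}

instance isProbabilityMeasure_P : IsProbabilityMeasure R.P := R.P_prob

def sepProb (t ε : ℝ) (x y : E) : ℝ≥0∞ :=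
  R.P {ω | ε ≤ dist (R.φ t ω x) (R.φ t ω y)}

def pullback (x : E) (t : ℝ) (ω : Ω) : E :=
  R.φ t (R.θ (-t) ω) x

theorem measurable_φ (t : ℝ) : Measurable fun p : Ω × E => R.φ t p.1 p.2 :=
  R.φ_meas.comp (measurable_const.prodMk measurable_id)

theorem measurable_φ_apply (t : ℝ) (x : E) : Measurable fun ω => R.φ t ω x :=
  (R.measurable_φ t).comp (measurable_id.prodMk measurable_const)

theorem measurable_sepProb [SecondCountableTopology E] (t ε : ℝ) :
    Measurable fun q : E × E => R.sepProb t ε q.1 q.2 :=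
  measurable_measure_prodMk_left <| measurableSet_le measurable_const <|
    ((R.measurable_φ t).comp (measurable_snd.prodMk measurable_fst.fst)).dist
      ((R.measurable_φ t).comp (measurable_snd.prodMk measurable_fst.snd))

theorem measurable_θ_F (r t : ℝ) : Measurable[R.F r (t + r), R.F 0 t] (R.θ r) := by
  rw [measurable_iff_comap_le, ← R.F_shift, zero_add]

theorem F0_le : R.F0 ≤ ‹MeasurableSpace Ω› :=
  iSup₂_le fun s _ => R.F_le s 0

theorem measurable_pullback_F0 (x : E) {t : ℝ} (ht : 0 ≤ t) :
    Measurable[R.F0] (R.pullback x t) := by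
  have hθ := R.measurable_θ_F (-t) t
  rw [add_neg_cancel] at hθ
  exact ((R.φ_adapted t ht x).comp hθ).mono
    (le_iSup₂ (f := fun s (_ : s ∈ Set.Iic 0) => R.F s 0) (-t) (neg_nonpos.2 ht)) le_rfl

theorem pullback_add_apply_θ (x : E) {t s : ℝ} (ht : 0 ≤ t) (hs : 0 ≤ s) (ω : Ω) :
    R.pullback x (t + s) (R.θ t ω) = R.φ t ω (R.pullback x s ω) := by
  have h₁ : R.θ (-(t + s)) (R.θ t ω) = R.θ (-s) ω := by rw [← R.θ_add]; ring_nf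
  have h₂ : R.θ s (R.θ (-s) ω) = ω := by rw [← R.θ_add, add_neg_cancel, R.θ_zero]
  rw [pullback, R.φ_cocycle s t hs ht, h₁, h₂, pullback]

theorem measure_dist_pullback_eq_sepProb [SecondCountableTopology E] (t ε : ℝ) (x y : E) :
    R.P {ω | ε ≤ dist (R.pullback x t ω) (R.pullback y t ω)} = R.sepProb t ε x y :=
  (R.θ_preserves (-t)).measure_preimage <| (measurableSet_le measurable_const <|
    (R.measurable_φ_apply t x).dist (R.measurable_φ_apply t y)).nullMeasurableSet

theorem sepProb_comm (t ε : ℝ) (x y : E) : R.sepProb t ε x y = R.sepProb t ε y x := by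
  simp only [sepProb, dist_comm]

theorem sepProb_le_lintegral [IsProbabilityMeasure ρ] (t ε : ℝ) (x z : E) (g : E → E) :
    R.sepProb t ε x z ≤ ∫⁻ y, R.sepProb t (ε / 2) x (g y) + R.sepProb t (ε / 2) (g y) z ∂ρ :=
  calc R.sepProb t ε x z = ∫⁻ _, R.sepProb t ε x z ∂ρ := by simp
    _ ≤ _ := lintegral_mono fun y => measure_le_dist_le_add R.P _ (R.φ t · (g y)) _ ε

theorem indep_F (r t : ℝ) (hr : 0 ≤ r) (ht : 0 ≤ t) :
    Indep (R.F 0 r) (R.F r (t + r)) R.P := by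
  have hmono : Monotone ![0, r, t + r] := by
    rw [Fin.monotone_iff_le_succ]
    simp [Fin.forall_fin_two, hr, ht]
  simpa using (R.F_indep 2 _ hmono).indep (i := 0) (j := 1) (by decide)

theorem measurableSet_sep [SecondCountableTopology E] (t ε : ℝ) (ht : 0 ≤ t) :
    MeasurableSet[(inferInstance : MeasurableSpace (E × E)).prod (R.F 0 t)]
      {p : (E × E) × Ω | ε ≤ dist (R.φ t p.2 p.1.1) (R.φ t p.2 p.1.2)} :=
  measurableSet_le_dist_of_continuous_of_measurable (mα := R.F 0 t) (u := fun y ω => R.φ t ω y)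
    (R.φ_cont t ht) (R.φ_adapted t ht) ε

theorem measure_sep_θ_eq_lintegral_sepProb [SecondCountableTopology E] {t r : ℝ} (ε : ℝ)
    (ht : 0 ≤ t) (hr : 0 ≤ r) {g : Ω → E × E} (hg : Measurable[R.F 0 r] g) :
    R.P {ω | ε ≤ dist (R.φ t (R.θ r ω) (g ω).1) (R.φ t (R.θ r ω) (g ω).2)} =
      ∫⁻ ω, R.sepProb t ε (g ω).1 (g ω).2 ∂ R.P := by
  have hind : @IndepFun Ω (E × E) Ω _ _ (R.F 0 t) g (R.θ r) R.P :=
    (IndepFun_iff_Indep (mγ := R.F 0 t) _ _ _).2 <|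
      indep_of_indep_of_le (R.indep_F r t hr ht) hg.comap_le (R.measurable_θ_F r t).comap_le
  refine (hind.measure_preimage_prodMk_eq_lintegral (mβ := R.F 0 t) (hg.mono (R.F_le 0 r) le_rfl)
    ((R.θ_meas r).mono le_rfl (R.F_le 0 t)) (R.measurableSet_sep t ε ht)).trans <|
      lintegral_congr fun ω => (R.θ_preserves r).measure_preimage ?_
  exact (R.F_le 0 t _ ((R.measurableSet_sep t ε ht).preimage
    (measurable_const.prodMk (@measurable_id Ω (R.F 0 t))))).nullMeasurableSet

theorem lintegral_sepProb_φ [SecondCountableTopology E] {t r : ℝ} (ε : ℝ) (ht : 0 ≤ t)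
    (hr : 0 ≤ r) (x y : E) :
    ∫⁻ ω, R.sepProb t ε (R.φ r ω x) (R.φ r ω y) ∂ R.P = R.sepProb (t + r) ε x y := by
  rw [← R.measure_sep_θ_eq_lintegral_sepProb ε ht hr
    ((R.φ_adapted r hr x).prodMk (R.φ_adapted r hr y))]
  simp only [sepProb, R.φ_cocycle r t hr ht]

theorem measure_dist_pullback_add_eq [SecondCountableTopology E] {t r : ℝ} (ε : ℝ)
    (ht : 0 ≤ t) (hr : 0 ≤ r) (x : E) :
    R.P {ω | ε ≤ dist (R.pullback x (t + r) ω) (R.pullback x t ω)} =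
      ∫⁻ ω, R.sepProb t ε (R.φ r ω x) x ∂ R.P := by
  have hθ : ∀ ω, R.θ r (R.θ (-(t + r)) ω) = R.θ (-t) ω := fun ω => by
    rw [← R.θ_add]; ring_nf
  have hset : {ω | ε ≤ dist (R.pullback x (t + r) ω) (R.pullback x t ω)} =
      R.θ (-(t + r)) ⁻¹' {ω | ε ≤ dist (R.φ t (R.θ r ω) (R.φ r ω x)) (R.φ t (R.θ r ω) x)} := by
    ext ω
    simp only [pullback, Set.mem_preimage, Set.mem_ofPred_eq, R.φ_cocycle r t hr ht, hθ]
  have hmeas : MeasurableSet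
      {ω | ε ≤ dist (R.φ t (R.θ r ω) (R.φ r ω x)) (R.φ t (R.θ r ω) x)} :=
    measurableSet_le measurable_const <|
      ((R.measurable_φ t).comp ((R.θ_meas r).prodMk (R.measurable_φ_apply r x))).dist
        ((R.measurable_φ t).comp ((R.θ_meas r).prodMk measurable_const))
  rw [hset, (R.θ_preserves _).measure_preimage hmeas.nullMeasurableSet]
  exact R.measure_sep_θ_eq_lintegral_sepProb ε ht hr ((R.φ_adapted r hr x).prodMk measurable_const)

theorem Invariant.map_prod_eq [IsProbabilityMeasure ρ] (hinv : R.Invariant ρ) {r : ℝ}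
    (hr : 0 ≤ r) : (ρ.prod R.P).map (fun p : E × Ω => R.φ r p.2 p.1) = ρ := by
  have hm : Measurable fun p : E × Ω => R.φ r p.2 p.1 := (R.measurable_φ r).comp measurable_swap
  have := Measure.isProbabilityMeasure_map (μ := ρ.prod R.P) hm.aemeasurable
  refine ext_of_forall_integral_eq_of_IsFiniteMeasure fun f => ?_
  rw [integral_map hm.aemeasurable f.continuous.aestronglyMeasurable,
    integral_prod (fun p : E × Ω => f (R.φ r p.2 p.1)) ((f.integrable _).comp_measurable hm),
    hinv r hr f]

theorem Invariant.lintegral_lintegral_φ [IsProbabilityMeasure ρ] (hinv : R.Invariant ρ)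
    {r : ℝ} (hr : 0 ≤ r) {f : E → ℝ≥0∞} (hf : Measurable f) :
    ∫⁻ x, ∫⁻ ω, f (R.φ r ω x) ∂ R.P ∂ρ = ∫⁻ x, f x ∂ρ := by
  have hm : Measurable fun p : E × Ω => R.φ r p.2 p.1 := (R.measurable_φ r).comp measurable_swap
  rw [← lintegral_prod (fun p : E × Ω => f (R.φ r p.2 p.1)) (hf.comp hm).aemeasurable,
    ← lintegral_map hf hm, hinv.map_prod_eq R hr]

theorem measure_dist_pullback_add_le [SecondCountableTopology E] [IsProbabilityMeasure ρ]
    (hinv : R.Invariant ρ) {t r : ℝ} (ε : ℝ) (ht : 0 ≤ t) (hr : 0 ≤ r) (x : E) :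
    R.P {ω | ε ≤ dist (R.pullback x (t + r) ω) (R.pullback x t ω)} ≤
      ∫⁻ y, R.sepProb (t + r) (ε / 2) x y ∂ρ + ∫⁻ y, R.sepProb t (ε / 2) x y ∂ρ := by
  have hφr := R.measurable_φ r
  have hA : Measurable fun p : Ω × E => R.sepProb t (ε / 2) (R.φ r p.1 x) (R.φ r p.1 p.2) :=
    (R.measurable_sepProb t _).comp ((hφr.comp (measurable_fst.prodMk measurable_const)).prodMk hφr)
  have hB : Measurable fun p : Ω × E => R.sepProb t (ε / 2) (R.φ r p.1 p.2) x :=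
    (R.measurable_sepProb t _).comp (hφr.prodMk measurable_const)
  calc R.P {ω | ε ≤ dist (R.pullback x (t + r) ω) (R.pullback x t ω)}
      = ∫⁻ ω, R.sepProb t ε (R.φ r ω x) x ∂ R.P := R.measure_dist_pullback_add_eq ε ht hr x
    _ ≤ ∫⁻ ω, ∫⁻ y, R.sepProb t (ε / 2) (R.φ r ω x) (R.φ r ω y) +
          R.sepProb t (ε / 2) (R.φ r ω y) x ∂ρ ∂ R.P :=
        lintegral_mono fun ω => R.sepProb_le_lintegral t ε _ _ (R.φ r ω)
    _ = ∫⁻ p : Ω × E, R.sepProb t (ε / 2) (R.φ r p.1 x) (R.φ r p.1 p.2) +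
          R.sepProb t (ε / 2) (R.φ r p.1 p.2) x ∂(R.P.prod ρ) :=
        (lintegral_prod _ (hA.add hB).aemeasurable).symm
    _ = ∫⁻ y, ∫⁻ ω, R.sepProb t (ε / 2) (R.φ r ω x) (R.φ r ω y) ∂ R.P ∂ρ +
          ∫⁻ y, ∫⁻ ω, R.sepProb t (ε / 2) (R.φ r ω y) x ∂ R.P ∂ρ := by
        rw [lintegral_add_left hA, lintegral_prod_symm _ hA.aemeasurable,
          lintegral_prod_symm _ hB.aemeasurable]
    _ = ∫⁻ y, R.sepProb (t + r) (ε / 2) x y ∂ρ + ∫⁻ y, R.sepProb t (ε / 2) x y ∂ρ := by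
        congr 1
        · exact lintegral_congr fun y => R.lintegral_sepProb_φ _ ht hr x y
        · refine (hinv.lintegral_lintegral_φ R hr (f := fun y => R.sepProb t (ε / 2) y x)
            ((R.measurable_sepProb t _).comp (measurable_id.prodMk measurable_const))).trans ?_
          exact lintegral_congr fun y => R.sepProb_comm t _ y x

theorem measure_dist_pullback_le [SecondCountableTopology E] [IsProbabilityMeasure ρ]
    (hinv : R.Invariant ρ) {u v : ℝ} (ε : ℝ) (hu : 0 ≤ u) (hv : 0 ≤ v) (x : E) :
    R.P {ω | ε ≤ dist (R.pullback x u ω) (R.pullback x v ω)} ≤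
      ∫⁻ y, R.sepProb u (ε / 2) x y ∂ρ + ∫⁻ y, R.sepProb v (ε / 2) x y ∂ρ := by
  rcases le_total v u with hvu | huv
  · simpa using R.measure_dist_pullback_add_le hinv ε hv (sub_nonneg.2 hvu) x
  · simp_rw [dist_comm (R.pullback x u _), add_comm (∫⁻ y, R.sepProb u (ε / 2) x y ∂ρ)]
    simpa using R.measure_dist_pullback_add_le hinv ε hu (sub_nonneg.2 huv) x

theorem tendsto_lintegral_sepProb [SecondCountableTopology E] [IsFiniteMeasure ρ] (ε : ℝ)
    (x : E) (hconv : ∀ y, Tendsto (fun t => R.sepProb t ε x y) atTop (𝓝 0)) :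
    Tendsto (fun t => ∫⁻ y, R.sepProb t ε x y ∂ρ) atTop (𝓝 0) := by
  simpa using tendsto_lintegral_filter_of_dominated_convergence (fun _ => 1)
    (.of_forall fun t => (R.measurable_sepProb t ε).comp (measurable_const.prodMk measurable_id))
    (.of_forall fun t => ae_of_all _ fun y => prob_le_one) (by simp) (ae_of_all _ hconv)

theorem tendsto_measure_dist_pullback [SecondCountableTopology E] [IsProbabilityMeasure ρ]
    (hinv : R.Invariant ρ) (x : E)
    (hconv : ∀ y ε, 0 < ε → Tendsto (fun t => R.sepProb t ε x y) atTop (𝓝 0))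
    (ε : ℝ) (hε : 0 < ε) :
    Tendsto (fun p : ℝ × ℝ => R.P {ω | ε ≤ dist (R.pullback x p.1 ω) (R.pullback x p.2 ω)})
      (atTop ×ˢ atTop) (𝓝 0) := by
  have hG := R.tendsto_lintegral_sepProb (ρ := ρ) (ε / 2) x fun y => hconv y _ (half_pos hε)
  refine tendsto_of_tendsto_of_tendsto_of_le_of_le' tendsto_const_nhds
    (by simpa using (hG.comp tendsto_fst).add (hG.comp tendsto_snd))
    (.of_forall fun _ => zero_le) ?_
  filter_upwards [prod_mem_prod (Ici_mem_atTop 0) (Ici_mem_atTop 0)] with p hp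
  exact R.measure_dist_pullback_le hinv ε hp.1 hp.2 x

theorem ae_φ_apply_eq_of_tendstoInMeasure {x : E} {a : Ω → E}
    (ha : TendstoInMeasure R.P (R.pullback x) atTop a) {t : ℝ} (ht : 0 ≤ t) :
    ∀ᵐ ω ∂ R.P, R.φ t ω (a ω) = a (R.θ t ω) := by
  obtain ⟨ns, hns, hae⟩ := ha.exists_seq_tendsto_ae'
  have hshift : TendstoInMeasure R.P (fun s => R.pullback x (t + s) ∘ R.θ t) atTop (a ∘ R.θ t) :=
    (ha.comp (tendsto_atTop_add_const_left _ t tendsto_id)).comp_measurePreserving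
      (R.θ_preserves t)
  obtain ⟨ms, hms, hae'⟩ := (hshift.comp hns).exists_seq_tendsto_ae'
  filter_upwards [hae, hae'] with ω hω hω'
  refine tendsto_nhds_unique ?_ hω'
  refine (((R.φ_cont t ht ω).tendsto (a ω)).comp (hω.comp hms)).congr' ?_
  filter_upwards [(hns.comp hms).eventually_ge_atTop 0] with k hk
  exact (R.pullback_add_apply_θ x ht hk ω).symm

theorem tendstoInMeasure_pullback [SecondCountableTopology E] {x₀ : E} {a : Ω → E}
    (ha : TendstoInMeasure R.P (R.pullback x₀) atTop a) (x : E)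
    (hconv : ∀ ε, 0 < ε → Tendsto (fun t => R.sepProb t ε x x₀) atTop (𝓝 0)) :
    TendstoInMeasure R.P (R.pullback x) atTop a := by
  refine tendstoInMeasure_iff_dist.2 fun ε hε => ?_
  have hsum := (hconv _ (half_pos hε)).add (tendstoInMeasure_iff_dist.1 ha _ (half_pos hε))
  rw [add_zero] at hsum
  refine tendsto_of_tendsto_of_tendsto_of_le_of_le tendsto_const_nhds hsum
    (fun _ => zero_le) fun t => ?_
  calc R.P {ω | ε ≤ dist (R.pullback x t ω) (a ω)}
      ≤ R.P {ω | ε / 2 ≤ dist (R.pullback x t ω) (R.pullback x₀ t ω)} +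
          R.P {ω | ε / 2 ≤ dist (R.pullback x₀ t ω) (a ω)} :=
        measure_le_dist_le_add _ _ _ _ ε
    _ = R.sepProb t (ε / 2) x x₀ + R.P {ω | ε / 2 ≤ dist (R.pullback x₀ t ω) (a ω)} := by
        rw [R.measure_dist_pullback_eq_sepProb]

end WhiteNoiseRDS

/-- **Corollary.** If a white-noise RDS on a complete separable metric space has an invariant
probability measure `ρ` and the distance of any two trajectories converges to `0` in
probability, then weak synchronization holds. -/
theorem weakSynchronization_of_pairwise_convergence
    {Ω E : Type} [MeasurableSpace Ω] [MetricSpace E] [CompleteSpace E]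
    [TopologicalSpace.SeparableSpace E] [MeasurableSpace E] [BorelSpace E]
    (R : WhiteNoiseRDS Ω E) (ρ : MeasureTheory.Measure E) [MeasureTheory.IsProbabilityMeasure ρ]
    (hinv : R.Invariant ρ)
    (hconv : ∀ x y : E, ∀ ε : ℝ, 0 < ε →
      Filter.Tendsto (fun t : ℝ => R.P {ω | ε ≤ dist (R.φ t ω x) (R.φ t ω y)})
        Filter.atTop (nhds 0)) :
    R.WeakSynchronization := by
  have := UniformSpace.secondCountable_of_separable E
  obtain ⟨x₀⟩ := nonempty_of_isProbabilityMeasure ρ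
  have : Nonempty E := ⟨x₀⟩
  obtain ⟨a, ha, hlim⟩ := exists_tendstoInMeasure_of_cauchy R.F0_le
    ((eventually_ge_atTop 0).mono fun t ht => R.measurable_pullback_F0 x₀ ht)
    (R.tendsto_measure_dist_pullback hinv x₀ (hconv x₀))
  exact ⟨a, ha, fun t ht => R.ae_φ_apply_eq_of_tendstoInMeasure hlim ht,
    fun x => tendstoInMeasure_iff_dist.1 (R.tendstoInMeasure_pullback hlim x (hconv x x₀))⟩
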